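/- arXiv:math/0211228 — 2 statements merged into one kernel-verified Lean document; each statement's English description precedes it below -/
import Mathlib

section
/- Epsilon-net with attained limits: let σᵢ : S^{n−1} → (0,∞] be functions with sup_V σᵢ(V) → ∞, and for any subsequence define its ray-like set R_∞ ⊆ S^{n−1} as the set of V with sup_{Vⱼ → V} limsup σ_{iⱼ}(Vⱼ) = ∞. Then for every ε > 0 there exist a finite set {V¹, …, V^A} ⊂ S^{n−1}, a subsequence (i_j), and for each α a sequence V_j^α → V^α with lim_{j→∞} σ_{i_j}(V_j^α) = ∞, such that the ray-like set R_∞' of the subsequence (i_j) satisfies {V¹,…,V^A} ⊆ R_∞' and R_∞' ⊆ ∪_{α=1}^A B(V^α, ε). -/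
open Filter Topology

/-- The ray-like set of the subsequence indexed by `φ`: directions `V` for which the
supremum over sequences `uⱼ → V` of `limsup σ_{φ(j)}(uⱼ)` is infinite. -/
noncomputable def rayLike {S : Type*} [TopologicalSpace S] (σ : ℕ → S → ENNReal)
    (φ : ℕ → ℕ) : Set S :=
  {V | (⨆ (u : ℕ → S) (_ : Tendsto u atTop (𝓝 V)),
      Filter.limsup (fun j => σ (φ j) (u j)) atTop) = ⊤}

/-!
Call a finite set `F` of directions good for a subsequence `φ` if every point of `F` carries a
sequence along `φ` on which `σ` tends to `∞`. If the ray-like set of `φ` is not covered by the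
`ε`-balls around `F`, pick an uncovered ray-like point `W`; along a further subsequence the
`limsup` witnessing `W` becomes a genuine limit, and the witnesses of `F` survive, so `F ∪ {W}`
is good and still `ε/2`-separated. On a compact space `ε/2`-separated sets have bounded size,
so this cannot go on forever.
-/

open scoped NNReal ENNReal

section RayLike

variable {S : Type*} [TopologicalSpace S] {σ : ℕ → S → ℝ≥0∞} {φ ψ : ℕ → ℕ} {V : S}

/-- The paper's witnessing sequence `V_j → V` with `σ_{φ(j)}(V_j) → ∞`: a limit, not a `limsup`. -/
def AttainsTop (σ : ℕ → S → ℝ≥0∞) (φ : ℕ → ℕ) (V : S) : Prop :=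
  ∃ u : ℕ → S, Tendsto u atTop (𝓝 V) ∧ Tendsto (fun j => σ (φ j) (u j)) atTop (𝓝 ⊤)

theorem AttainsTop.mem_rayLike (h : AttainsTop σ φ V) : V ∈ rayLike σ φ := by
  obtain ⟨u, hu, hσ⟩ := h
  refine top_unique ?_
  rw [← hσ.limsup_eq]
  exact le_iSup₂ (f := fun (u : ℕ → S) (_ : Tendsto u atTop (𝓝 V)) =>
    limsup (fun j => σ (φ j) (u j)) atTop) u hu

theorem AttainsTop.comp (h : AttainsTop σ φ V) (hψ : Tendsto ψ atTop atTop) :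
    AttainsTop σ (φ ∘ ψ) V :=
  let ⟨u, hu, hσ⟩ := h
  ⟨u ∘ ψ, hu.comp hψ, hσ.comp hψ⟩

theorem frequently_exists_lt_of_mem_rayLike (hV : V ∈ rayLike σ φ) {c : ℝ≥0∞} (hc : c ≠ ⊤)
    {U : Set S} (hU : U ∈ 𝓝 V) : ∃ᶠ j in atTop, ∃ x ∈ U, c < σ (φ j) x := by
  have hlt : c < ⨆ (u : ℕ → S) (_ : Tendsto u atTop (𝓝 V)),
      limsup (fun j => σ (φ j) (u j)) atTop := by
    rw [show _ = ⊤ from hV]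
    exact hc.lt_top
  obtain ⟨u, hu⟩ := lt_iSup_iff.mp hlt
  obtain ⟨hu, hcu⟩ := lt_iSup_iff.mp hu
  have hfreq : ∃ᶠ j in atTop, c < σ (φ j) (u j) := frequently_lt_of_lt_limsup (h := hcu)
  exact (hfreq.and_eventually (hu hU)).mono fun j ⟨hj, hjU⟩ => ⟨u j, hjU, hj⟩

-- Diagonal extraction over a countable neighbourhood basis of `V`.
theorem exists_strictMono_attainsTop_comp [FirstCountableTopology S] (hV : V ∈ rayLike σ φ) :
    ∃ ψ : ℕ → ℕ, StrictMono ψ ∧ AttainsTop σ (φ ∘ ψ) V := by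
  obtain ⟨B, hB⟩ := (𝓝 V).exists_antitone_basis
  obtain ⟨ψ, hψ, hP⟩ := extraction_forall_of_frequently fun m =>
    frequently_exists_lt_of_mem_rayLike hV (ENNReal.natCast_ne_top m) (hB.mem m)
  choose u huB hσu using hP
  refine ⟨ψ, hψ, u, hB.tendsto huB, ENNReal.tendsto_nhds_top_iff_nat.mpr fun N => ?_⟩
  filter_upwards [eventually_ge_atTop N] with m hm
  exact (Nat.cast_le.mpr hm).trans_lt (hσu m)

theorem exists_strictMono_forall_attainsTop_insert [FirstCountableTopology S] {F : Set S}
    (hF : ∀ V ∈ F, AttainsTop σ φ V) {W : S} (hW : W ∈ rayLike σ φ) :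
    ∃ ψ : ℕ → ℕ, StrictMono ψ ∧ ∀ V ∈ insert W F, AttainsTop σ (φ ∘ ψ) V := by
  obtain ⟨ψ, hψ, hWψ⟩ := exists_strictMono_attainsTop_comp hW
  refine ⟨ψ, hψ, fun V hV => ?_⟩
  rcases hV with rfl | hVF
  · exact hWψ
  · exact (hF V hVF).comp hψ.tendsto_atTop

end RayLike

theorem Metric.exists_encard_le_of_isSeparated {X : Type*} [PseudoEMetricSpace X] [CompactSpace X]
    {ε : ℝ≥0} (hε : ε ≠ 0) : ∃ N : ℕ, ∀ C : Set X, IsSeparated ε C → C.encard ≤ N := by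
  obtain ⟨N, -, hNfin, hN⟩ :=
    exists_finite_isCover_of_isCompact (half_pos hε.bot_lt).ne' (isCompact_univ (X := X))
  refine ⟨N.ncard, fun C hC => ?_⟩
  calc C.encard ≤ packingNumber (2 * (ε / 2)) Set.univ :=
        IsSeparated.encard_le_packingNumber (Set.subset_univ C) (by rwa [mul_div_cancel₀ _ two_ne_zero])
    _ ≤ externalCoveringNumber (ε / 2) Set.univ :=
        packingNumber_two_mul_le_externalCoveringNumber _ _
    _ ≤ N.encard := hN.externalCoveringNumber_le_encard
    _ = N.ncard := hNfin.cast_ncard_eq.symm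

section Net

variable {S : Type*} [PseudoMetricSpace S] {σ : ℕ → S → ℝ≥0∞} {φ : ℕ → ℕ}

theorem exists_notMem_forall_attainsTop_isSeparated_insert {δ : ℝ≥0} {ε : ℝ}
    (hδε : (δ : ℝ) < ε) {F : Set S} (hF : ∀ V ∈ F, AttainsTop σ φ V)
    (hsep : Metric.IsSeparated δ F) (hcov : ¬ rayLike σ φ ⊆ ⋃ V ∈ F, Metric.ball V ε) :
    ∃ W ∉ F, ∃ ψ : ℕ → ℕ, StrictMono ψ ∧ (∀ V ∈ insert W F, AttainsTop σ (φ ∘ ψ) V) ∧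
      Metric.IsSeparated δ (insert W F) := by
  obtain ⟨W, hW, hWF⟩ := Set.not_subset.mp hcov
  have hfar : ∀ V ∈ F, ε ≤ dist W V := fun V hV =>
    not_lt.mp fun h => hWF (Set.mem_iUnion₂.mpr ⟨V, hV, Metric.mem_ball.mpr h⟩)
  obtain ⟨ψ, hψ, hψF⟩ := exists_strictMono_forall_attainsTop_insert hF hW
  refine ⟨W, fun hWF' => ?_, ψ, hψ, hψF, hsep.insert fun V hV _ => ?_⟩
  · linarith [hfar W hWF', dist_self W, δ.coe_nonneg]
  · rw [edist_dist, ENNReal.coe_lt_ofReal]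
    exact hδε.trans_le (hfar V hV)

theorem exists_finset_forall_attainsTop_rayLike_subset [CompactSpace S]
    (σ : ℕ → S → ℝ≥0∞) {ε : ℝ} (hε : 0 < ε) :
    ∃ (F : Finset S) (φ : ℕ → ℕ), StrictMono φ ∧ (∀ V ∈ F, AttainsTop σ φ V) ∧
      rayLike σ φ ⊆ ⋃ V ∈ F, Metric.ball V ε := by
  classical
  by_contra hnot
  set δ : ℝ≥0 := (ε / 2).toNNReal
  have hδε : (δ : ℝ) < ε := by
    rw [Real.coe_toNNReal _ (half_pos hε).le]
    linarith
  have grow : ∀ k : ℕ, ∃ (F : Finset S) (φ : ℕ → ℕ), StrictMono φ ∧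
      (∀ V ∈ F, AttainsTop σ φ V) ∧ Metric.IsSeparated δ (F : Set S) ∧ F.card = k := by
    intro k
    induction k with
    | zero => exact ⟨∅, id, strictMono_id, by simp, by simp, rfl⟩
    | succ k ih =>
      obtain ⟨F, φ, hφ, hF, hsep, rfl⟩ := ih
      obtain ⟨W, hWF, ψ, hψ, hψF, hψsep⟩ := exists_notMem_forall_attainsTop_isSeparated_insert
        hδε hF hsep fun hcov => hnot ⟨F, φ, hφ, hF, hcov⟩
      refine ⟨insert W F, φ ∘ ψ, hφ.comp hψ, ?_, ?_, Finset.card_insert_of_notMem hWF⟩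
      · simpa only [← Finset.mem_coe, Finset.coe_insert] using hψF
      · rwa [Finset.coe_insert]
  obtain ⟨N, hN⟩ := Metric.exists_encard_le_of_isSeparated (X := S)
    (Real.toNNReal_pos.mpr (half_pos hε)).ne'
  obtain ⟨F, -, -, -, hsep, hcard⟩ := grow (N + 1)
  have := hN _ hsep
  rw [Set.encard_coe_eq_coe_finsetCard, hcard, Nat.cast_le] at this
  omega

end Net

theorem stmt_7_general (n : ℕ)
    (σ : ℕ → (Metric.sphere (0 : EuclideanSpace ℝ (Fin n)) 1) → ENNReal)
    (ε : ℝ) (hε : 0 < ε) :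
    ∃ (A : ℕ) (Vs : Fin A → Metric.sphere (0 : EuclideanSpace ℝ (Fin n)) 1)
      (φ : ℕ → ℕ), StrictMono φ ∧
      (∀ a : Fin A, ∃ u : ℕ → Metric.sphere (0 : EuclideanSpace ℝ (Fin n)) 1,
        Tendsto u atTop (𝓝 (Vs a)) ∧ Tendsto (fun j => σ (φ j) (u j)) atTop (𝓝 ⊤)) ∧
      (∀ a : Fin A, Vs a ∈ rayLike σ φ) ∧
      rayLike σ φ ⊆ ⋃ a : Fin A, Metric.ball (Vs a) ε := by
  obtain ⟨F, φ, hφ, hF, hcov⟩ := exists_finset_forall_attainsTop_rayLike_subset σ hε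
  have hVs : ∀ a, AttainsTop σ φ (F.equivFin.symm a) := fun a => hF _ (F.equivFin.symm a).2
  refine ⟨F.card, fun a => F.equivFin.symm a, φ, hφ, hVs, fun a => (hVs a).mem_rayLike, ?_⟩
  intro V hV
  obtain ⟨W, hW, hVW⟩ := Set.mem_iUnion₂.mp (hcov hV)
  exact Set.mem_iUnion.mpr ⟨F.equivFin ⟨W, hW⟩, by simpa using hVW⟩

/-- Epsilon-net with attained limits: if `sup_V σᵢ(V) → ∞`, then for every `ε > 0`
there are finitely many directions `V¹,…,V^A` and a subsequence `φ` such that each `V^α`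
has a witnessing sequence `V_j^α → V^α` with `σ_{φ(j)}(V_j^α) → ∞` (so each `V^α` lies in
the ray-like set `R_∞'` of the subsequence), and `R_∞' ⊆ ⋃_α B(V^α, ε)`. -/
theorem stmt_7 (n : ℕ)
    (σ : ℕ → (Metric.sphere (0 : EuclideanSpace ℝ (Fin n)) 1) → ENNReal)
    (hsup : Tendsto (fun i => ⨆ V, σ i V) atTop (𝓝 ⊤))
    (ε : ℝ) (hε : 0 < ε) :
    ∃ (A : ℕ) (Vs : Fin A → Metric.sphere (0 : EuclideanSpace ℝ (Fin n)) 1)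
      (φ : ℕ → ℕ), StrictMono φ ∧
      (∀ a : Fin A, ∃ u : ℕ → Metric.sphere (0 : EuclideanSpace ℝ (Fin n)) 1,
        Tendsto u atTop (𝓝 (Vs a)) ∧ Tendsto (fun j => σ (φ j) (u j)) atTop (𝓝 ⊤)) ∧
      (∀ a : Fin A, Vs a ∈ rayLike σ φ) ∧
      rayLike σ φ ⊆ ⋃ a : Fin A, Metric.ball (Vs a) ε :=
  stmt_7_general n σ ε hε
end

section
/- Second variation estimate along a long minimizing geodesic: let γ : [0, S] → M be a unit-speed minimizing geodesic with S > 1, let X be a parallel unit vector field along γ orthogonal to γ̇, suppose all sectional curvatures along γ|[0,1] are ≥ η > 0 and all sectional curvatures along γ are ≥ −δ. Let f(s) = 1 for 0 ≤ s ≤ 1 and f(s) = (S − s)/(S − 1) for 1 < s ≤ S. Then the index form satisfies I(fX, fX) ≤ −η + 1/(S − 1) + δ(S − 1)/3. In particular, if 1/(S−1) ≤ η/3 and δ(S−1) ≤ η, then I(fX, fX) ≤ −η/3 < 0, contradicting the minimality of γ (which requires I ≥ 0 for variations vanishing at the endpoint). -/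
/-- Second variation estimate along a long minimizing geodesic: with `S > 1`,
`κ s` the sectional curvature of the plane spanned by `γ̇(s)` and the parallel unit
field `X(s)`, `κ ≥ η > 0` on `[0,1]` and `κ ≥ -δ` on `[0,S]`, the index form of the
cutoff field `fX` (with `f = 1` on `[0,1]` and `f(s) = (S-s)/(S-1)` on `[1,S]`) is
`I = -∫₀¹ κ + ∫₁^S ((1/(S-1))² - ((S-s)/(S-1))² κ(s)) ds ≤ -η + 1/(S-1) + δ(S-1)/3`;
in particular, if `1/(S-1) ≤ η/3` and `δ(S-1) ≤ η`, then `I ≤ -η/3 < 0`, contradicting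
the minimality of the geodesic (which forces `I ≥ 0`). -/
theorem stmt_13 (S η δ : ℝ) (hS : 1 < S) (hη : 0 < η) (hδ : 0 ≤ δ)
    (κ : ℝ → ℝ) (hκc : Continuous κ)
    (hκ1 : ∀ s ∈ Set.Icc (0:ℝ) 1, η ≤ κ s)
    (hκ2 : ∀ s ∈ Set.Icc (0:ℝ) S, -δ ≤ κ s) :
    ((∫ s in (0:ℝ)..1, -κ s) +
      ∫ s in (1:ℝ)..S, ((1 / (S - 1)) ^ 2 - ((S - s) / (S - 1)) ^ 2 * κ s))
      ≤ -η + 1 / (S - 1) + δ * (S - 1) / 3 ∧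
    (1 / (S - 1) ≤ η / 3 → δ * (S - 1) ≤ η →
      ((∫ s in (0:ℝ)..1, -κ s) +
        ∫ s in (1:ℝ)..S, ((1 / (S - 1)) ^ 2 - ((S - s) / (S - 1)) ^ 2 * κ s))
        ≤ -η / 3 ∧ -η / 3 < 0) := by
  have hS1 : (0:ℝ) < S - 1 := by linarith
  have hS1' : S - 1 ≠ 0 := ne_of_gt hS1
  -- first integral bound
  have h1 : (∫ s in (0:ℝ)..1, -κ s) ≤ ∫ s in (0:ℝ)..1, -η := by
    apply intervalIntegral.integral_mono_on (by norm_num)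
    · exact (hκc.neg.intervalIntegrable _ _)
    · exact intervalIntegrable_const
    · intro s hs
      have := hκ1 s hs
      linarith
  have h1' : (∫ s in (0:ℝ)..1, -η) = -η := by simp
  -- second integral bound
  have h2 : (∫ s in (1:ℝ)..S, ((1 / (S - 1)) ^ 2 - ((S - s) / (S - 1)) ^ 2 * κ s))
      ≤ ∫ s in (1:ℝ)..S, ((1 / (S - 1)) ^ 2 + ((S - s) / (S - 1)) ^ 2 * δ) := by
    apply intervalIntegral.integral_mono_on (le_of_lt hS)
    · exact (Continuous.intervalIntegrable (by continuity) _ _)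
    · exact (Continuous.intervalIntegrable (by continuity) _ _)
    · intro s hs
      have hs0 : s ∈ Set.Icc (0:ℝ) S := ⟨by linarith [hs.1], hs.2⟩
      have hk := hκ2 s hs0
      have hsq : (0:ℝ) ≤ ((S - s) / (S - 1)) ^ 2 := sq_nonneg _
      nlinarith
  -- compute the upper integral
  have h3 : (∫ s in (1:ℝ)..S, ((1 / (S - 1)) ^ 2 + ((S - s) / (S - 1)) ^ 2 * δ))
      = 1 / (S - 1) + δ * (S - 1) / 3 := by
    have hderiv : ∀ s ∈ Set.uIcc (1:ℝ) S,
        HasDerivAt (fun s => (1 / (S - 1)) ^ 2 * s - δ * (S - s) ^ 3 / (3 * (S - 1) ^ 2))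
          ((1 / (S - 1)) ^ 2 + ((S - s) / (S - 1)) ^ 2 * δ) s := by
      intro s _
      have h : HasDerivAt (fun s : ℝ => (1 / (S - 1)) ^ 2 * s - δ * (S - s) ^ 3 / (3 * (S - 1) ^ 2))
          ((1 / (S - 1)) ^ 2 * 1 - δ * (3 * (S - s) ^ 2 * (0 - 1)) / (3 * (S - 1) ^ 2)) s := by
        apply HasDerivAt.sub
        · exact (hasDerivAt_id s).const_mul _
        · exact (((hasDerivAt_const s S).sub (hasDerivAt_id s)).pow 3).const_mul δ |>.div_const _
      convert h using 1
      field_simp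
      ring
    rw [intervalIntegral.integral_eq_sub_of_hasDerivAt hderiv
      (Continuous.intervalIntegrable (by continuity) _ _)]
    field_simp
    ring
  have key : ((∫ s in (0:ℝ)..1, -κ s) +
      ∫ s in (1:ℝ)..S, ((1 / (S - 1)) ^ 2 - ((S - s) / (S - 1)) ^ 2 * κ s))
      ≤ -η + 1 / (S - 1) + δ * (S - 1) / 3 := by
    rw [h1'] at h1
    rw [h3] at h2
    linarith
  refine ⟨key, fun ha hb => ⟨?_, by linarith⟩⟩
  linarith
end
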